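/- (Coercivity of the least-squares bilinear form.) Let ℓ_Ω = h_Ω denote the diameter of Ω and define, for (σ, u), (p, v) ∈ H(div,Ω) × H¹₀(Ω), the bilinear form A(σ, u; p, v) = (σ + ∇u, ∇v) + ℓ_Ω² (∇·σ, ∇·p) + (σ + ∇u, p). Then there exists a constant C (which can be taken equal to 8) such that for all (p, v) ∈ H(div,Ω) × H¹₀(Ω), A(p, v; p, v) ≥ (1/C) ( ‖p‖_Ω² + ℓ_Ω² ‖∇·p‖_Ω² + ‖∇v‖_Ω² ). -/

import Mathlib

/- Common setting: domains, meshes, broken polynomial / Raviart–Thomas–Nédélec spaces,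
weak divergence and H(div) spaces, the equilibrated-flux projector of
Ern, Gudi, Smears & Vohralík, and local/global best-approximation errors. -/

noncomputable section
open MeasureTheory Set
open scoped RealInnerProductSpace
attribute [local instance] Classical.propDecidable

abbrev Euc (d : ℕ) := EuclideanSpace ℝ (Fin d)

variable {d : ℕ}

/-- The `L²(s)` norm of a function. -/
def nOn {F : Type*} [NormedAddCommGroup F] (s : Set (Euc d)) (f : Euc d → F) : ℝ :=
  Real.sqrt (∫ x in s, ‖f x‖ ^ 2)

/-- Membership in `L²(s)`. -/
def MemL2 {F : Type*} [NormedAddCommGroup F] (s : Set (Euc d)) (f : Euc d → F) : Prop :=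
  MemLp f 2 (volume.restrict s)

/-- Smooth test functions compactly supported in `U`. -/
def TestFun (U : Set (Euc d)) (φ : Euc d → ℝ) : Prop :=
  ContDiff ℝ (⊤ : ℕ∞) φ ∧ HasCompactSupport φ ∧ tsupport φ ⊆ U

/-- `w` is the weak divergence of `v` on `U`. -/
def IsWeakDiv (U : Set (Euc d)) (v : Euc d → Euc d) (w : Euc d → ℝ) : Prop :=
  ∀ φ, TestFun U φ →
    (∫ x in U, ⟪v x, gradient φ x⟫) = - ∫ x in U, w x * φ x

/-- `v ∈ H(div, U)` with weak divergence `w`. -/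
def MemHdiv (U : Set (Euc d)) (v : Euc d → Euc d) (w : Euc d → ℝ) : Prop :=
  MemL2 U v ∧ MemL2 U w ∧ IsWeakDiv U v w

/-- `g` is the weak gradient of `φ` on `U`. -/
def IsWeakGrad (U : Set (Euc d)) (φ : Euc d → ℝ) (g : Euc d → Euc d) : Prop :=
  ∀ ψ, TestFun U ψ → ∀ i : Fin d,
    (∫ x in U, φ x * fderiv ℝ ψ x (EuclideanSpace.single i 1)) = - ∫ x in U, g x i * ψ x

/-- `φ ∈ H¹(U)` with weak gradient `g`. -/
def MemH1 (U : Set (Euc d)) (φ : Euc d → ℝ) (g : Euc d → Euc d) : Prop :=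
  MemL2 U φ ∧ MemL2 U g ∧ IsWeakGrad U φ g

/-- `φ` (with weak gradient `g`) has zero trace on `Γ₀`: it can be approximated in the
`H¹(U)` norm by smooth functions vanishing on a neighbourhood of `Γ₀`. -/
def ZeroTraceOn (U Γ₀ : Set (Euc d)) (φ : Euc d → ℝ) (g : Euc d → Euc d) : Prop :=
  ∀ ε > 0, ∃ ψ : Euc d → ℝ, ContDiff ℝ (⊤ : ℕ∞) ψ ∧
    (∃ W, IsOpen W ∧ Γ₀ ⊆ W ∧ ∀ x ∈ W, ψ x = 0) ∧
    nOn U (fun x => φ x - ψ x) + nOn U (fun x => g x - gradient ψ x) < ε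

/-- `v ∈ H_{0,N}(div, U)` with weak divergence `w`: the normal-trace pairing
`⟨v·n, φ⟩ = ∫_U [v·∇φ + (∇·v) φ]` vanishes for all `φ ∈ H¹(U)` with zero trace on `ΓD`. -/
def MemH0N (U ΓD : Set (Euc d)) (v : Euc d → Euc d) (w : Euc d → ℝ) : Prop :=
  MemHdiv U v w ∧ ∀ φ g, MemH1 U φ g → ZeroTraceOn U ΓD φ g →
    (∫ x in U, ⟪v x, g x⟫) + ∫ x in U, w x * φ x = 0

/-- `f` is a polynomial function of total degree at most `p`. -/
def IsPolyDeg (p : ℕ) (f : Euc d → ℝ) : Prop :=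
  ∃ q : MvPolynomial (Fin d) ℝ, q.totalDegree ≤ p ∧
    ∀ x : Euc d, f x = MvPolynomial.eval (fun i => x i) q

/-- `f` is a vector-valued polynomial of total degree at most `p` (componentwise). -/
def IsVecPoly (p : ℕ) (f : Euc d → Euc d) : Prop :=
  ∀ i : Fin d, IsPolyDeg p (fun x => f x i)

/-- Raviart–Thomas–Nédélec functions of degree `p`: `RTN_p = P_p(ℝ^d) + x·P_p`. -/
def IsRTN (p : ℕ) (f : Euc d → Euc d) : Prop :=
  ∃ g : Euc d → Euc d, ∃ h : Euc d → ℝ, IsVecPoly p g ∧ IsPolyDeg p h ∧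
    ∀ x, f x = g x + h x • x

/-- Pointwise (classical) divergence. -/
def cdiv (f : Euc d → Euc d) (x : Euc d) : ℝ :=
  ∑ i : Fin d, fderiv ℝ f x (EuclideanSpace.single i 1) i

/-- A nondegenerate simplex in `ℝ^d`. -/
structure Splx (d : ℕ) where
  vert : Fin (d + 1) → Euc d
  indep : AffineIndependent ℝ vert

namespace Splx
/-- The (closed) simplex as a set. -/
def S (K : Splx d) : Set (Euc d) := convexHull ℝ (Set.range K.vert)
/-- Diameter `h_K`. -/
def diam (K : Splx d) : ℝ := Metric.diam K.S
/-- Diameter `ρ_K` of the largest inscribed ball. -/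
def inball (K : Splx d) : ℝ := sSup {r : ℝ | ∃ x, Metric.ball x (r / 2) ⊆ K.S}
/-- Shape-regularity ratio `κ_K = h_K / ρ_K`. -/
def kappa (K : Splx d) : ℝ := K.diam / K.inball
/-- The face of `K` spanned by the vertices indexed by `s`. -/
def face (K : Splx d) (s : Finset (Fin (d + 1))) : Set (Euc d) :=
  convexHull ℝ (K.vert '' ↑s)
end Splx

/-- A conforming simplicial mesh of `Ω`. -/
structure Mesh (d : ℕ) (Ω : Set (Euc d)) where
  elems : Finset (Splx d)
  verts : Finset (Euc d)
  cover : (⋃ K ∈ elems, Splx.S K) = closure Ω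
  conform : ∀ K ∈ elems, ∀ K' ∈ elems, K ≠ K' →
    Splx.S K ∩ Splx.S K' = convexHull ℝ (Set.range K.vert ∩ Set.range K'.vert)
  verts_eq : (verts : Set (Euc d)) = ⋃ K ∈ elems, Set.range K.vert

namespace Mesh
variable {Ω : Set (Euc d)}
/-- The patch `T_a` of elements sharing the vertex `a`. -/
def patch (T : Mesh d Ω) (a : Euc d) : Finset (Splx d) :=
  T.elems.filter fun K => a ∈ Set.range K.vert
/-- The open patch subdomain `ω_a`. -/
def omega (T : Mesh d Ω) (a : Euc d) : Set (Euc d) :=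
  interior (⋃ K ∈ T.patch a, Splx.S K)
/-- The neighbours `T_K` of `K`: elements sharing at least one vertex with `K`. -/
def nbr (T : Mesh d Ω) (K : Splx d) : Finset (Splx d) :=
  T.elems.filter fun K' => (Set.range K.vert ∩ Set.range K'.vert).Nonempty
end Mesh

/-- The full setting: a bounded connected polytopal domain `Ω ⊆ ℝ^d`, a closed Dirichlet
boundary part `ΓD ⊆ ∂Ω` (with Neumann part `ΓN = ∂Ω \ ΓD`), and a conforming simplicial
mesh `T` of `Ω` whose boundary faces match `ΓD` and `ΓN`. -/
structure Setting (d : ℕ) where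
  Ω : Set (Euc d)
  ΓD : Set (Euc d)
  T : Mesh d Ω
  open_Ω : IsOpen Ω
  bounded_Ω : Bornology.IsBounded Ω
  connected_Ω : IsConnected Ω
  closed_ΓD : IsClosed ΓD
  ΓD_sub : ΓD ⊆ frontier Ω
  bdry_match : ∀ K ∈ T.elems, ∀ s : Finset (Fin (d + 1)), s.card = d →
    Splx.face K s ⊆ frontier Ω →
    Splx.face K s ⊆ ΓD ∨ Splx.face K s ⊆ closure (frontier Ω \ ΓD)

namespace Setting
/-- The Neumann part of the boundary. -/
def ΓN (S : Setting d) : Set (Euc d) := frontier S.Ω \ S.ΓD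
/-- `Γ_D^a`: the boundary faces contained in `Γ_D` sharing the vertex `a`. -/
def GammaDa (S : Setting d) (a : Euc d) : Set (Euc d) :=
  ⋃ K ∈ S.T.patch a, ⋃ s ∈ {s : Finset (Fin (d + 1)) |
      s.card = d ∧ a ∈ K.vert '' ↑s ∧ Splx.face K s ⊆ S.ΓD}, Splx.face K s
/-- The part of `∂ω_a` on which the normal flux of members of `V_h^a` is left free:
`Γ_D^a` for Dirichlet boundary vertices, and `∅` for interior or Neumann vertices. -/
def dirPart (S : Setting d) (a : Euc d) : Set (Euc d) :=
  {x | a ∈ S.ΓD ∧ x ∈ S.GammaDa a}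
end Setting

/-- Shape-regularity bound `κ_T ≤ κ`. -/
def ShapeReg (S : Setting d) (κ : ℝ) : Prop :=
  ∀ K ∈ S.T.elems, Splx.kappa K ≤ κ

/-- Membership in the patchwise equilibration space `V_h^a`: a piecewise `RTN_p` field on
the patch `T_a`, `H(div, ω_a)`-conforming, with zero normal flux on `∂ω_a`
(resp. on `∂ω_a \ Γ_D^a` for Dirichlet boundary vertices). -/
def MemVha (S : Setting d) (p : ℕ) (a : Euc d) (va : Euc d → Euc d) : Prop :=
  (∀ K ∈ S.T.patch a, ∃ f, IsRTN p f ∧ Set.EqOn va f (interior (Splx.S K))) ∧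
  MemH0N (S.T.omega a) (S.dirPart a) va (cdiv va)

/-- Membership in the broken space `RTN_p(T)`. -/
def BrokenRTN (S : Setting d) (p : ℕ) (w : Euc d → Euc d) : Prop :=
  ∀ K ∈ S.T.elems, ∃ f, IsRTN p f ∧ Set.EqOn w f (interior (Splx.S K))

/-- Membership in the broken polynomial space `P_p(T)`. -/
def BrokenPoly (S : Setting d) (p : ℕ) (g : Euc d → ℝ) : Prop :=
  ∀ K ∈ S.T.elems, ∃ q, IsPolyDeg p q ∧ Set.EqOn g q (interior (Splx.S K))

/-- `q` is the `L²(U)`-orthogonal projection of `g` onto polynomials of degree ≤ `p`. -/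
def IsL2ProjOn (p : ℕ) (U : Set (Euc d)) (g q : Euc d → ℝ) : Prop :=
  (∃ f, IsPolyDeg p f ∧ Set.EqOn q f U) ∧
  ∀ r, IsPolyDeg p r → (∫ x in U, (g x - q x) * r x) = 0

/-- `q = Π_T^p g`, the elementwise `L²`-orthogonal projection onto `P_p(T)`. -/
def IsBrokenProj (S : Setting d) (p : ℕ) (g q : Euc d → ℝ) : Prop :=
  ∀ K ∈ S.T.elems, IsL2ProjOn p (interior (Splx.S K)) g q

/-- `ψ = ψ_a`, the piecewise affine hat function associated with the vertex `a`. -/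
def IsHat (S : Setting d) (a : Euc d) (ψ : Euc d → ℝ) : Prop :=
  (∀ K ∈ S.T.elems, ∃ f : Euc d →ᵃ[ℝ] ℝ, Set.EqOn ψ (⇑f) (Splx.S K)) ∧
  ψ a = 1 ∧ (∀ b ∈ S.T.verts, b ≠ a → ψ b = 0) ∧
  (∀ K ∈ S.T.elems, K ∉ S.T.patch a → ∀ x ∈ Splx.S K, ψ x = 0)

/-- `f = θ_h|_K`: minimizer of `‖v - v_K‖_K` over `v_K ∈ RTN_p(K)` subject to the
divergence constraint `∇·v_K = Pdv` on `K`. -/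
def IsElemMin (p : ℕ) (K : Splx d) (v : Euc d → Euc d) (Pdv : Euc d → ℝ)
    (f : Euc d → Euc d) : Prop :=
  IsRTN p f ∧ (∀ x ∈ interior (Splx.S K), cdiv f x = Pdv x) ∧
  ∀ g, IsRTN p g → (∀ x ∈ interior (Splx.S K), cdiv g x = Pdv x) →
    nOn (Splx.S K) (fun x => v x - f x) ≤ nOn (Splx.S K) (fun x => v x - g x)

/-- `f = (I_T^p w)|_K`: the canonical (elementwise) RTN interpolant of `w` on `K`,
defined by moments of the normal component on the faces of `K` (against `P_p`, with
respect to the `(d-1)`-dimensional Hausdorff measure) and volume moments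
(against `P_{p-1}(K; ℝ^d)`). -/
def IsCanonInterp (p : ℕ) (K : Splx d) (w f : Euc d → Euc d) : Prop :=
  IsRTN p f ∧
  (∀ s : Finset (Fin (d + 1)), s.card = d →
    ∀ ν ∈ (vectorSpan ℝ ((K.vert '' ↑s) : Set (Euc d)))ᗮ, ∀ q, IsPolyDeg p q →
      (∫ x in Splx.face K s, ⟪f x - w x, ν⟫ * q x
        ∂(Measure.hausdorffMeasure ((d : ℝ) - 1))) = 0) ∧
  (0 < p → ∀ r, IsVecPoly (p - 1) r → (∫ x in Splx.S K, ⟪f x - w x, r x⟫) = 0)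

/-- `sa = s_h^a`: the minimizer of `‖v_a − I_T^p(ψ_a θ_h)‖_{ω_a}` over `v_a ∈ V_h^a`
subject to `∇·v_a = Π_T^p(ψ_a ∇·v + ∇ψ_a·θ_h)` (= `ga`), extended by zero outside `ω_a`;
`Ia K = I_T^p(ψ_a θ_h)|_K`. -/
def IsSha (S : Setting d) (p : ℕ) (v : Euc d → Euc d) (dv : Euc d → ℝ)
    (ψ : Euc d → ℝ) (θ : Splx d → Euc d → Euc d) (a : Euc d)
    (ga : Euc d → ℝ) (Ia : Splx d → Euc d → Euc d) (sa : Euc d → Euc d) : Prop :=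
  (∀ K ∈ S.T.patch a, IsL2ProjOn p (interior (Splx.S K))
      (fun x => ψ x * dv x + ⟪gradient ψ x, θ K x⟫) ga) ∧
  (∀ K ∈ S.T.patch a, IsCanonInterp p K (fun x => ψ x • θ K x) (Ia K)) ∧
  MemVha S p a sa ∧
  (∀ K ∈ S.T.patch a, ∀ x ∈ interior (Splx.S K), cdiv sa x = ga x) ∧
  (∀ x, x ∉ S.T.omega a → sa x = 0) ∧
  (∀ w, MemVha S p a w →
    (∀ K ∈ S.T.patch a, ∀ x ∈ interior (Splx.S K), cdiv w x = ga x) →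
    ∑ K ∈ S.T.patch a, (nOn (Splx.S K) (fun x => sa x - Ia K x)) ^ 2 ≤
      ∑ K ∈ S.T.patch a, (nOn (Splx.S K) (fun x => w x - Ia K x)) ^ 2)

/-- `Pv = P_T^p(v)`: the two-step equilibration construction. Step (i): on each element,
`θ K` is the divergence-constrained `L²`-best approximation of `v` in `RTN_p(K)`;
step (ii): on each vertex patch, `sa a` is the constrained minimizer against the target
`I_T^p(ψ_a θ_h)`; then `P_T^p(v) = ∑_a s_h^a`. -/
def IsProj (S : Setting d) (p : ℕ) (v : Euc d → Euc d) (dv Pdv : Euc d → ℝ)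
    (Pv : Euc d → Euc d) : Prop :=
  ∃ θ : Splx d → Euc d → Euc d, ∃ ψ : Euc d → Euc d → ℝ,
    ∃ ga : Euc d → Euc d → ℝ, ∃ Ia : Euc d → Splx d → Euc d → Euc d,
    ∃ sa : Euc d → Euc d → Euc d,
    (∀ K ∈ S.T.elems, IsElemMin p K v Pdv (θ K)) ∧
    (∀ a ∈ S.T.verts, IsHat S a (ψ a)) ∧
    (∀ a ∈ S.T.verts, IsSha S p v dv (ψ a) θ a (ga a) (Ia a) (sa a)) ∧
    Pv = fun x => ∑ a ∈ S.T.verts, sa a x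

/-- The squared local best-approximation error `[E_K^p(v)]²`: unconstrained `L²(K)`-best
approximation by `RTN_p(K)` plus the weighted divergence oscillation term. -/
def ElocSq (p : ℕ) (K : Splx d) (v : Euc d → Euc d) (dv Pdv : Euc d → ℝ) : ℝ :=
  sInf {r : ℝ | ∃ f, IsRTN p f ∧ r = (nOn (Splx.S K) (fun x => v x - f x)) ^ 2} +
    (K.diam / (p + 1) * nOn (Splx.S K) (fun x => dv x - Pdv x)) ^ 2

/-- The squared global best-approximation error `[E_glob^p(v)]²`: constrained best
approximation by `RTN_p(T) ∩ H_{0,N}(div,Ω)` with `∇·v_h = Π_T^p(∇·v)`, plus the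
weighted divergence oscillation terms. -/
def EglobSq (S : Setting d) (p : ℕ) (v : Euc d → Euc d) (dv Pdv : Euc d → ℝ) : ℝ :=
  sInf {r : ℝ | ∃ w, BrokenRTN S p w ∧ MemH0N S.Ω S.ΓD w Pdv ∧
      r = (nOn S.Ω (fun x => v x - w x)) ^ 2} +
    ∑ K ∈ S.T.elems, (K.diam / (p + 1) * nOn (Splx.S K) (fun x => dv x - Pdv x)) ^ 2

end

noncomputable section
open MeasureTheory Set
open scoped RealInnerProductSpace


open MeasureTheory Set
open scoped RealInnerProductSpace

open scoped ENNReal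

variable {α : Type*} [MeasurableSpace α] {μ : Measure α}
variable {E : Type*} [NormedAddCommGroup E] [InnerProductSpace ℝ E]

lemma norm_toLp_sq (f : α → E) (hf : MemLp f 2 μ) :
    ‖hf.toLp f‖ ^ 2 = ∫ x, ‖f x‖ ^ 2 ∂μ := by
  have h1 : ‖hf.toLp f‖ ^ 2 = ⟪hf.toLp f, hf.toLp f⟫ := by
    rw [real_inner_self_eq_norm_sq]
  rw [h1, L2.inner_def]
  apply integral_congr_ae
  filter_upwards [hf.coeFn_toLp] with x hx
  rw [hx, real_inner_self_eq_norm_sq]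

lemma my_cs (f g : α → E) (hf : MemLp f 2 μ) (hg : MemLp g 2 μ) :
    |∫ x, ⟪f x, g x⟫ ∂μ| ≤
      Real.sqrt (∫ x, ‖f x‖ ^ 2 ∂μ) * Real.sqrt (∫ x, ‖g x‖ ^ 2 ∂μ) := by
  have h1 : (∫ x, ⟪f x, g x⟫ ∂μ) = ⟪hf.toLp f, hg.toLp g⟫ := by
    rw [L2.inner_def]
    apply integral_congr_ae
    filter_upwards [hf.coeFn_toLp, hg.coeFn_toLp] with x hx hy
    rw [hx, hy]
  have h2 : Real.sqrt (∫ x, ‖f x‖ ^ 2 ∂μ) = ‖hf.toLp f‖ := by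
    rw [← norm_toLp_sq f hf, Real.sqrt_sq (norm_nonneg _)]
  have h3 : Real.sqrt (∫ x, ‖g x‖ ^ 2 ∂μ) = ‖hg.toLp g‖ := by
    rw [← norm_toLp_sq g hg, Real.sqrt_sq (norm_nonneg _)]
  rw [h1, h2, h3]
  exact abs_real_inner_le_norm _ _

lemma my_integrable_inner (f g : α → E) (hf : MemLp f 2 μ) (hg : MemLp g 2 μ) :
    Integrable (fun x => ⟪f x, g x⟫) μ := by
  have := L2.integrable_inner (𝕜 := ℝ) (hf.toLp f) (hg.toLp g)
  apply this.congr
  filter_upwards [hf.coeFn_toLp, hg.coeFn_toLp] with x hx hy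
  rw [hx, hy]

lemma my_tri (f g : α → E) (hf : MemLp f 2 μ) (hg : MemLp g 2 μ) :
    Real.sqrt (∫ x, ‖f x + g x‖ ^ 2 ∂μ) ≤
      Real.sqrt (∫ x, ‖f x‖ ^ 2 ∂μ) + Real.sqrt (∫ x, ‖g x‖ ^ 2 ∂μ) := by
  have hfg : MemLp (f + g) 2 μ := hf.add hg
  have h0 : Real.sqrt (∫ x, ‖f x + g x‖ ^ 2 ∂μ) = ‖hfg.toLp (f + g)‖ := by
    have : (∫ x, ‖f x + g x‖ ^ 2 ∂μ) = ∫ x, ‖(f + g) x‖ ^ 2 ∂μ := rfl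
    rw [this, ← norm_toLp_sq (f + g) hfg, Real.sqrt_sq (norm_nonneg _)]
  have h2 : Real.sqrt (∫ x, ‖f x‖ ^ 2 ∂μ) = ‖hf.toLp f‖ := by
    rw [← norm_toLp_sq f hf, Real.sqrt_sq (norm_nonneg _)]
  have h3 : Real.sqrt (∫ x, ‖g x‖ ^ 2 ∂μ) = ‖hg.toLp g‖ := by
    rw [← norm_toLp_sq g hg, Real.sqrt_sq (norm_nonneg _)]
  rw [h0, h2, h3, MemLp.toLp_add]
  exact norm_add_le _ _

lemma my_cs' {α : Type*} [MeasurableSpace α] {μ : Measure α} (f g : α → ℝ)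
    (hf : MemLp f 2 μ) (hg : MemLp g 2 μ) :
    |∫ x, f x * g x ∂μ| ≤
      Real.sqrt (∫ x, ‖f x‖ ^ 2 ∂μ) * Real.sqrt (∫ x, ‖g x‖ ^ 2 ∂μ) := by
  have h := my_cs f g hf hg
  simpa [RCLike.inner_apply, starRingEnd_apply, mul_comm] using h

lemma slice1d {f g : ℝ → ℝ} {a b M : ℝ} (hab : a ≤ b)
    (hder : ∀ t, HasDerivAt f (g t) t) (hg : Continuous g) (hM : ∀ t, |g t| ≤ M)
    (hsupp : ∀ t, f t ≠ 0 → t ∈ Icc a b) :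
    ∫⁻ t, ENNReal.ofReal (f t ^ 2) ≤
      ENNReal.ofReal ((b - a) ^ 2) * ∫⁻ t, ENNReal.ofReal (g t ^ 2) := by
  have hfc : Continuous f := by
    rw [continuous_iff_continuousAt]; exact fun t => (hder t).continuousAt
  -- f a = 0
  have hIio : ∀ t, t < a → f t = 0 := fun t ht => by
    by_contra h; exact absurd ((hsupp t h).1) (not_le.2 ht)
  have hfa : f a = 0 := by
    have h1 : Filter.Tendsto f (nhdsWithin a (Iio a)) (nhds (f a)) :=
      (hfc.tendsto a).mono_left nhdsWithin_le_nhds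
    have h2 : Filter.Tendsto f (nhdsWithin a (Iio a)) (nhds 0) := by
      apply Filter.Tendsto.congr' _ tendsto_const_nhds
      filter_upwards [self_mem_nhdsWithin] with t ht
      exact (hIio t ht).symm
    exact tendsto_nhds_unique h1 h2
  have hgint : IntegrableOn (fun s => g s ^ 2) (Ioc a b) := by
    exact (hg.pow 2).integrableOn_Ioc
  have hC0 : 0 ≤ ∫ s in Ioc a b, g s ^ 2 :=
    setIntegral_nonneg measurableSet_Ioc fun s _ => sq_nonneg _
  set C : ℝ := ∫ s in Ioc a b, g s ^ 2 with hC
  -- key pointwise bound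
  have key : ∀ t ∈ Icc a b, f t ^ 2 ≤ (b - a) * C := by
    intro t ht
    have hat : a ≤ t := ht.1
    have hFTC : f t = ∫ s in a..t, g s := by
      rw [intervalIntegral.integral_eq_sub_of_hasDerivAt (fun s _ => hder s)
        (hg.intervalIntegrable a t), hfa, sub_zero]
    have hset : f t = ∫ s in Ioc a t, g s := by
      rw [hFTC, intervalIntegral.integral_of_le hat]
    have hgm : MemLp g 2 (volume.restrict (Ioc a t)) := by
      refine MemLp.of_bound (hg.aestronglyMeasurable.restrict) M ?_
      exact Filter.Eventually.of_forall fun s => by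
        simpa [Real.norm_eq_abs] using hM s
    have h1m : MemLp (fun _ : ℝ => (1:ℝ)) 2 (volume.restrict (Ioc a t)) := memLp_const 1
    have hcs := my_cs' g (fun _ => (1:ℝ)) hgm h1m
    simp only [mul_one, norm_one, one_pow] at hcs
    have hvol : (∫ _ in Ioc a t, (1:ℝ)) = t - a := by
      simp [Real.volume_Ioc, ENNReal.toReal_ofReal (by linarith : (0:ℝ) ≤ t - a), hat]
    rw [hvol] at hcs
    have hg2 : (∫ s in Ioc a t, ‖g s‖ ^ 2) = ∫ s in Ioc a t, g s ^ 2 := by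
      simp [Real.norm_eq_abs, sq_abs]
    rw [hg2] at hcs
    have hmono : (∫ s in Ioc a t, g s ^ 2) ≤ C := by
      apply setIntegral_mono_set hgint
      · exact Filter.Eventually.of_forall fun s => sq_nonneg _
      · exact HasSubset.Subset.eventuallyLE (Ioc_subset_Ioc_right ht.2)
    have h2 : f t ^ 2 ≤ (∫ s in Ioc a t, g s ^ 2) * (t - a) := by
      rw [hset]
      calc (∫ s in Ioc a t, g s) ^ 2 = |∫ s in Ioc a t, g s| ^ 2 := (sq_abs _).symm
        _ ≤ (Real.sqrt (∫ s in Ioc a t, g s ^ 2) * Real.sqrt (t - a)) ^ 2 := by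
            apply pow_le_pow_left₀ (abs_nonneg _) hcs
        _ = (∫ s in Ioc a t, g s ^ 2) * (t - a) := by
            rw [mul_pow, Real.sq_sqrt (setIntegral_nonneg measurableSet_Ioc fun s _ => sq_nonneg _),
              Real.sq_sqrt (by linarith : (0:ℝ) ≤ t - a)]
    calc f t ^ 2 ≤ (∫ s in Ioc a t, g s ^ 2) * (t - a) := h2
      _ ≤ C * (b - a) := by
          apply mul_le_mul hmono (by linarith [ht.2]) (by linarith) hC0
      _ = (b - a) * C := mul_comm _ _
  -- lintegral bound
  have hzero : ∀ t, t ∉ Icc a b → ENNReal.ofReal (f t ^ 2) = 0 := fun t ht => by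
    have : f t = 0 := by by_contra h; exact ht (hsupp t h)
    simp [this]
  calc ∫⁻ t, ENNReal.ofReal (f t ^ 2)
      = ∫⁻ t in Icc a b, ENNReal.ofReal (f t ^ 2) := by
        rw [← lintegral_indicator measurableSet_Icc]
        congr 1; funext t
        by_cases ht : t ∈ Icc a b
        · simp [indicator_of_mem ht]
        · simp [indicator_of_notMem ht, hzero t ht]
    _ ≤ ∫⁻ _ in Icc a b, ENNReal.ofReal ((b - a) * C) := by
        apply setLIntegral_mono measurable_const
        intro t ht
        exact ENNReal.ofReal_le_ofReal (key t ht)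
    _ = ENNReal.ofReal ((b - a) * C) * volume (Icc a b) := by
        rw [setLIntegral_const]
    _ = ENNReal.ofReal ((b - a) ^ 2) * ENNReal.ofReal C := by
        rw [Real.volume_Icc, ← ENNReal.ofReal_mul (mul_nonneg (by linarith : (0:ℝ) ≤ b - a) hC0),
          ← ENNReal.ofReal_mul (by positivity : (0:ℝ) ≤ (b-a)^2)]
        congr 1; ring
    _ ≤ ENNReal.ofReal ((b - a) ^ 2) * ∫⁻ t, ENNReal.ofReal (g t ^ 2) := by
        apply mul_le_mul_right
        rw [hC, ofReal_integral_eq_lintegral_ofReal hgint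
          (Filter.Eventually.of_forall fun s => sq_nonneg _)]
        exact (setLIntegral_le_lintegral _ _)




section Poincare
variable {n : ℕ}

lemma eucshift (t : ℝ) (y : Fin n → ℝ) :
    (((MeasurableEquiv.toLp 2 (Fin (n+1) → ℝ)).symm.trans
      (MeasurableEquiv.piFinSuccAbove (fun _ => ℝ) 0)).symm (t, y) : Euc (n+1)) =
    (((MeasurableEquiv.toLp 2 (Fin (n+1) → ℝ)).symm.trans
      (MeasurableEquiv.piFinSuccAbove (fun _ => ℝ) 0)).symm (0, y) : Euc (n+1))
      + t • (EuclideanSpace.single (0 : Fin (n+1)) (1:ℝ)) := by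
  apply PiLp.ext
  intro i
  simp only [MeasurableEquiv.trans, MeasurableEquiv.coe_mk, Equiv.trans,
    MeasurableEquiv.symm_symm, MeasurableEquiv.coe_toLp, MeasurableEquiv.piFinSuccAbove_symm_apply,
    PiLp.add_apply, PiLp.smul_apply, EuclideanSpace.single_apply, smul_eq_mul]
  induction i using Fin.cases with
  | zero => simp
  | succ j =>
    rw [← Fin.zero_succAbove j]
    simp [Fin.insertNth_apply_succAbove, Fin.succAbove_ne_zero_zero]
end Poincare

section P2
variable {n : ℕ}


lemma poincare (ψ : Euc (n+1) → ℝ) (hψ : ContDiff ℝ (⊤ : ℕ∞) ψ) (hc : HasCompactSupport ψ)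
    {a b : ℝ} (hab : a ≤ b) (hsupp : ∀ x ∈ tsupport ψ, x 0 ∈ Icc a b) :
    ∫ x, ψ x ^ 2 ≤ (b - a) ^ 2 * ∫ x, ‖gradient ψ x‖ ^ 2 := by
  classical
  set v : Euc (n+1) := EuclideanSpace.single (0 : Fin (n+1)) (1:ℝ) with hv
  set G : Euc (n+1) → ℝ := fun x => fderiv ℝ ψ x v with hG
  have hψd : Differentiable ℝ ψ := hψ.differentiable (by simp)
  have hGcont : Continuous G := by
    exact (hψ.continuous_fderiv (by simp)).clm_apply continuous_const
  have hGsupp : ∀ x, G x ≠ 0 → x ∈ tsupport ψ := by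
    intro x hx
    by_contra h
    exact hx (by simp [hG, fderiv_of_notMem_tsupport ℝ h])
  have hGb : ∃ M, ∀ x, |G x| ≤ M := by
    rcases (hc.fderiv ℝ).exists_bound_of_continuous (hψ.continuous_fderiv (by simp))
      with ⟨M, hM⟩
    refine ⟨M, fun x => ?_⟩
    calc |G x| ≤ ‖fderiv ℝ ψ x‖ * ‖v‖ := (fderiv ℝ ψ x).le_opNorm v
      _ ≤ M * 1 := by
          apply mul_le_mul (hM x) ?_ (norm_nonneg _) ((norm_nonneg _).trans (hM x))
          simp [hv, EuclideanSpace.norm_single]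
      _ = M := mul_one M
  -- gradient facts
  have hgrad_inner : ∀ x (u : Euc (n+1)), ⟪gradient ψ x, u⟫ = fderiv ℝ ψ x u := by
    intro x u
    rw [gradient]
    exact InnerProductSpace.toDual_symm_apply
  have hGle : ∀ x, G x ^ 2 ≤ ‖gradient ψ x‖ ^ 2 := by
    intro x
    rw [← sq_abs (G x), ← sq_abs ‖gradient ψ x‖]
    apply pow_le_pow_left₀ (abs_nonneg _)
    show |(fderiv ℝ ψ x) v| ≤ |‖gradient ψ x‖|
    rw [← hgrad_inner x v]
    calc |⟪gradient ψ x, v⟫| ≤ ‖gradient ψ x‖ * ‖v‖ := abs_real_inner_le_norm _ _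
      _ = ‖gradient ψ x‖ := by simp [hv, EuclideanSpace.norm_single]
      _ = |‖gradient ψ x‖| := (abs_of_nonneg (norm_nonneg _)).symm
  have hgradcont : Continuous (fun x => gradient ψ x) := by
    apply Continuous.comp (LinearIsometryEquiv.continuous _) (hψ.continuous_fderiv (by simp))
  have hgradsupp : HasCompactSupport (fun x => gradient ψ x) := by
    apply (hc.fderiv ℝ).comp_left (g := (InnerProductSpace.toDual ℝ _).symm)
    simp
  -- integrability
  have hint1 : Integrable (fun x => ψ x ^ 2) := by
    apply Continuous.integrable_of_hasCompactSupport (hψ.continuous.pow 2)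
    exact hc.mul_left
  have hint2 : Integrable (fun x => G x ^ 2) := by
    apply Continuous.integrable_of_hasCompactSupport (hGcont.pow 2)
    apply HasCompactSupport.mul_left
    apply HasCompactSupport.intro hc.isCompact
    exact fun x hx => by
      by_contra h
      exact hx (hGsupp x h)
  have hint3 : Integrable (fun x => ‖gradient ψ x‖ ^ 2) := by
    apply Continuous.integrable_of_hasCompactSupport (hgradcont.norm.pow 2)
    exact hgradsupp.norm.mul_left
  -- reduce to lintegral inequality
  have main : ∫⁻ x, ENNReal.ofReal (ψ x ^ 2) ≤
      ENNReal.ofReal ((b - a) ^ 2) * ∫⁻ x, ENNReal.ofReal (G x ^ 2) := by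
    obtain ⟨M, hM⟩ := hGb
    set e : Euc (n+1) ≃ᵐ (ℝ × (Fin n → ℝ)) :=
      (MeasurableEquiv.toLp 2 (Fin (n+1) → ℝ)).symm.trans
        (MeasurableEquiv.piFinSuccAbove (fun _ => ℝ) 0) with he
    have hmp : MeasurePreserving e volume volume :=
      (volume_preserving_piFinSuccAbove (fun _ : Fin (n+1) => ℝ) 0).comp
        (EuclideanSpace.volume_preserving_symm_measurableEquiv_toLp (Fin (n+1)))
    have hmps : MeasurePreserving e.symm volume volume := hmp.symm
    have hcoord : ∀ (t : ℝ) (y : Fin n → ℝ), (e.symm (t, y) : Euc (n+1)) 0 = t := by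
      intro t y
      simp [he, MeasurableEquiv.symm_symm, MeasurableEquiv.coe_toLp,
        MeasurableEquiv.piFinSuccAbove_symm_apply]
    have hce : ∀ (t : ℝ) (y : Fin n → ℝ), e.symm (t, y) = e.symm (0, y) + t • v :=
      fun t y => eucshift t y
    have hmeas1 : Measurable (fun x : Euc (n+1) => ENNReal.ofReal (ψ x ^ 2)) :=
      (hψ.continuous.pow 2).measurable.ennreal_ofReal
    have hmeas2 : Measurable (fun x : Euc (n+1) => ENNReal.ofReal (G x ^ 2)) :=
      (hGcont.pow 2).measurable.ennreal_ofReal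
    have t1 : ∫⁻ x, ENNReal.ofReal (ψ x ^ 2) =
        ∫⁻ p : ℝ × (Fin n → ℝ), ENNReal.ofReal (ψ (e.symm p) ^ 2) :=
      (hmps.lintegral_comp hmeas1).symm
    have t2 : ∫⁻ x, ENNReal.ofReal (G x ^ 2) =
        ∫⁻ p : ℝ × (Fin n → ℝ), ENNReal.ofReal (G (e.symm p) ^ 2) :=
      (hmps.lintegral_comp hmeas2).symm
    have fub1 : ∫⁻ p : ℝ × (Fin n → ℝ), ENNReal.ofReal (ψ (e.symm p) ^ 2) =
        ∫⁻ y, ∫⁻ t, ENNReal.ofReal (ψ (e.symm (t, y)) ^ 2) := by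
      rw [Measure.volume_eq_prod]
      exact lintegral_prod_symm _ ((hmeas1.comp e.symm.measurable).aemeasurable)
    have fub2 : ∫⁻ p : ℝ × (Fin n → ℝ), ENNReal.ofReal (G (e.symm p) ^ 2) =
        ∫⁻ y, ∫⁻ t, ENNReal.ofReal (G (e.symm (t, y)) ^ 2) := by
      rw [Measure.volume_eq_prod]
      exact lintegral_prod_symm _ ((hmeas2.comp e.symm.measurable).aemeasurable)
    rw [t1, t2, fub1, fub2, ← lintegral_const_mul' _ _ ENNReal.ofReal_ne_top]
    apply lintegral_mono
    intro y
    -- slice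
    set c : ℝ → Euc (n+1) := fun t => e.symm (0, y) + t • v with hcc
    have hceq : ∀ t, e.symm (t, y) = c t := fun t => hce t y
    have hcderiv : ∀ t, HasDerivAt c v t := by
      intro t
      have h1 : HasDerivAt (fun s : ℝ => s • v) ((1:ℝ) • v) t :=
        (hasDerivAt_id t).smul_const v
      simpa [hcc] using h1.const_add (e.symm (0, y))
    have hccont : Continuous c := continuous_const.add (continuous_id.smul continuous_const)
    have hder : ∀ t, HasDerivAt (fun s => ψ (c s)) (G (c t)) t := by
      intro t
      have := ((hψd (c t)).hasFDerivAt).comp_hasDerivAt t (hcderiv t)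
      exact this
    have hslice := slice1d hab hder (hGcont.comp hccont) (fun t => hM (c t)) ?_
    · calc ∫⁻ t, ENNReal.ofReal (ψ (e.symm (t, y)) ^ 2)
          = ∫⁻ t, ENNReal.ofReal (ψ (c t) ^ 2) :=
            lintegral_congr fun t => by rw [hceq t]
        _ ≤ ENNReal.ofReal ((b - a) ^ 2) * ∫⁻ t, ENNReal.ofReal (G (c t) ^ 2) := hslice
        _ = ENNReal.ofReal ((b - a) ^ 2) *
              ∫⁻ t, ENNReal.ofReal (G (e.symm (t, y)) ^ 2) :=
            congrArg _ (lintegral_congr fun t => by rw [hceq t])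
    · intro t ht
      have hts : c t ∈ tsupport ψ := subset_tsupport ψ (Function.mem_support.mpr ht)
      have := hsupp _ hts
      rwa [← hceq t, hcoord t y] at this
  have h1 : ENNReal.ofReal (∫ x, ψ x ^ 2) = ∫⁻ x, ENNReal.ofReal (ψ x ^ 2) :=
    ofReal_integral_eq_lintegral_ofReal hint1 (Filter.Eventually.of_forall fun x => sq_nonneg _)
  have h2 : ENNReal.ofReal (∫ x, G x ^ 2) = ∫⁻ x, ENNReal.ofReal (G x ^ 2) :=
    ofReal_integral_eq_lintegral_ofReal hint2 (Filter.Eventually.of_forall fun x => sq_nonneg _)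
  have step : ∫ x, ψ x ^ 2 ≤ (b - a) ^ 2 * ∫ x, G x ^ 2 := by
    rw [← ENNReal.ofReal_le_ofReal_iff (by positivity)]
    rw [h1, ENNReal.ofReal_mul (by positivity), h2]
    exact main
  refine step.trans ?_
  apply mul_le_mul_of_nonneg_left _ (by positivity)
  exact integral_mono hint2 hint3 hGle
end P2


lemma grad_zero_of_nmem {d : ℕ} {f : Euc d → ℝ} {x : Euc d} (h : x ∉ tsupport f) :
    gradient f x = 0 := by
  rw [gradient, fderiv_of_notMem_tsupport ℝ h]
  simp

lemma coord_bound {d : ℕ} (x y : Euc d) (i : Fin d) : |x i - y i| ≤ dist x y := by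
  rw [EuclideanSpace.dist_eq, ← Real.sqrt_sq (abs_nonneg (x i - y i))]
  apply Real.sqrt_le_sqrt
  have h := Finset.single_le_sum (f := fun j => dist (x j) (y j) ^ 2)
    (fun j _ => sq_nonneg _) (Finset.mem_univ i)
  simpa [Real.dist_eq, sq_abs] using h

lemma poincare_domain {n : ℕ} {Ω : Set (Euc (n+1))} (hΩb : Bornology.IsBounded Ω)
    (hne : Ω.Nonempty) (hΩm : MeasurableSet Ω)
    {ψ : Euc (n+1) → ℝ} (hψ : ContDiff ℝ (⊤ : ℕ∞) ψ) (hc : HasCompactSupport ψ)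
    (hts : tsupport ψ ⊆ Ω) :
    Real.sqrt (∫ x in Ω, ‖ψ x‖ ^ 2) ≤
      Metric.diam Ω * Real.sqrt (∫ x in Ω, ‖gradient ψ x‖ ^ 2) := by
  classical
  have hKc : IsCompact (closure Ω) :=
    Metric.isCompact_of_isClosed_isBounded isClosed_closure hΩb.closure
  have hproj : Continuous fun x : Euc (n+1) => x 0 := by
    exact (EuclideanSpace.proj (0 : Fin (n+1))).continuous
  have himc : IsCompact ((fun x : Euc (n+1) => x 0) '' closure Ω) := hKc.image hproj
  have hnec : ((fun x : Euc (n+1) => x 0) '' closure Ω).Nonempty :=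
    (hne.closure).image _
  set a := sInf ((fun x : Euc (n+1) => x 0) '' closure Ω) with ha
  set b := sSup ((fun x : Euc (n+1) => x 0) '' closure Ω) with hb
  have hab : a ≤ b := csInf_le_csSup hnec himc.bddBelow himc.bddAbove
  have hsupp : ∀ x ∈ tsupport ψ, x 0 ∈ Set.Icc a b := by
    intro x hx
    have hmem : x 0 ∈ (fun x : Euc (n+1) => x 0) '' closure Ω :=
      ⟨x, subset_closure (hts hx), rfl⟩
    exact ⟨csInf_le himc.bddBelow hmem, le_csSup himc.bddAbove hmem⟩
  have hba : b - a ≤ Metric.diam Ω := by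
    obtain ⟨pa, hpa, hpa0⟩ := himc.sInf_mem hnec
    obtain ⟨pb, hpb, hpb0⟩ := himc.sSup_mem hnec
    have hpa0' : pa 0 = a := by simpa [ha] using hpa0
    have hpb0' : pb 0 = b := by simpa [hb] using hpb0
    rw [← Metric.diam_closure]
    calc b - a = pb 0 - pa 0 := by rw [hpa0', hpb0']
      _ ≤ |pb 0 - pa 0| := le_abs_self _
      _ ≤ dist pb pa := coord_bound pb pa 0
      _ ≤ Metric.diam (closure Ω) := Metric.dist_le_diam_of_mem hKc.isBounded hpb hpa
  have hpoin := poincare ψ hψ hc hab hsupp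
  have hzero1 : ∀ x ∉ Ω, ψ x ^ 2 = 0 := fun x hx => by
    rw [image_eq_zero_of_notMem_tsupport (fun h => hx (hts h))]; ring
  have hzero2 : ∀ x ∉ Ω, ‖gradient ψ x‖ ^ 2 = 0 := fun x hx => by
    rw [grad_zero_of_nmem (fun h => hx (hts h))]; simp
  have he1 : (∫ x in Ω, ‖ψ x‖ ^ 2) = ∫ x, ψ x ^ 2 := by
    calc ∫ x in Ω, ‖ψ x‖ ^ 2 = ∫ x in Ω, ψ x ^ 2 := by simp [Real.norm_eq_abs, sq_abs]
      _ = ∫ x, ψ x ^ 2 := setIntegral_eq_integral_of_forall_compl_eq_zero hzero1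
  have he2 : (∫ x in Ω, ‖gradient ψ x‖ ^ 2) = ∫ x, ‖gradient ψ x‖ ^ 2 :=
    setIntegral_eq_integral_of_forall_compl_eq_zero hzero2
  have hL0 : (0:ℝ) ≤ Metric.diam Ω := Metric.diam_nonneg
  have hI0 : (0:ℝ) ≤ ∫ x in Ω, ‖gradient ψ x‖ ^ 2 :=
    setIntegral_nonneg hΩm fun x _ => sq_nonneg _
  calc Real.sqrt (∫ x in Ω, ‖ψ x‖ ^ 2)
      ≤ Real.sqrt ((b - a) ^ 2 * ∫ x in Ω, ‖gradient ψ x‖ ^ 2) := by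
        apply Real.sqrt_le_sqrt
        rw [he1, he2]
        exact hpoin
    _ ≤ Real.sqrt (Metric.diam Ω ^ 2 * ∫ x in Ω, ‖gradient ψ x‖ ^ 2) := by
        apply Real.sqrt_le_sqrt
        apply mul_le_mul_of_nonneg_right _ hI0
        apply sq_le_sq'
        · linarith [hab, Metric.diam_nonneg (s := Ω)]
        · exact hba
    _ = Metric.diam Ω * Real.sqrt (∫ x in Ω, ‖gradient ψ x‖ ^ 2) := by
        rw [Real.sqrt_mul (sq_nonneg _), Real.sqrt_sq hL0]

lemma glue {d : ℕ} {Ω : Set (Euc d)} (hΩo : IsOpen Ω) (hΩb : Bornology.IsBounded Ω)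
    {ψ : Euc d → ℝ} (hψ : ContDiff ℝ (⊤ : ℕ∞) ψ) {W : Set (Euc d)} (hW : IsOpen W)
    (hΓW : frontier Ω ⊆ W) (hψW : ∀ x ∈ W, ψ x = 0) :
    ∃ ψ' : Euc d → ℝ, ContDiff ℝ (⊤ : ℕ∞) ψ' ∧ HasCompactSupport ψ' ∧ tsupport ψ' ⊆ Ω ∧
      Set.EqOn ψ' ψ Ω ∧ Set.EqOn (gradient ψ') (gradient ψ) Ω := by
  classical
  set ψ' : Euc d → ℝ := fun x => if x ∈ closure Ω then ψ x else 0 with hψ'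
  have hW0 : ∀ x ∈ W, ψ' x = 0 := by
    intro x hx
    by_cases h : x ∈ closure Ω <;> simp [hψ', h, hψW x hx]
  have hext : ∀ x, x ∉ closure Ω → ψ' x = 0 := fun x h => by simp [hψ', h]
  have hEq : Set.EqOn ψ' ψ Ω := fun x hx => by simp [hψ', subset_closure hx]
  have hcover : ∀ x : Euc d, x ∈ Ω ∨ x ∈ W ∨ x ∉ closure Ω := by
    intro x
    by_cases h1 : x ∈ Ω
    · exact Or.inl h1
    by_cases h2 : x ∈ closure Ω
    · refine Or.inr (Or.inl (hΓW ?_))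
      rw [frontier, hΩo.interior_eq]
      exact ⟨h2, h1⟩
    · exact Or.inr (Or.inr h2)
  have hsm : ContDiff ℝ (⊤ : ℕ∞) ψ' := by
    rw [contDiff_iff_contDiffAt]
    intro x
    rcases hcover x with hx | hx | hx
    · apply hψ.contDiffAt.congr_of_eventuallyEq
      filter_upwards [hΩo.mem_nhds hx] with y hy
      exact hEq hy
    · apply (contDiffAt_const (c := (0:ℝ))).congr_of_eventuallyEq
      filter_upwards [hW.mem_nhds hx] with y hy
      exact hW0 y hy
    · apply (contDiffAt_const (c := (0:ℝ))).congr_of_eventuallyEq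
      filter_upwards [(isOpen_compl_iff.mpr isClosed_closure).mem_nhds hx] with y hy
      exact hext y hy
  have hsub : tsupport ψ' ⊆ Ω := by
    intro x hx
    have h1 : tsupport ψ' ⊆ closure Ω := by
      apply closure_minimal _ isClosed_closure
      intro y hy
      by_contra h
      exact hy (hext y h)
    have h2 : tsupport ψ' ⊆ Wᶜ := by
      apply closure_minimal _ (isClosed_compl_iff.mpr hW)
      intro y hy hyW
      exact hy (hW0 y hyW)
    rcases hcover x with h | h | h
    · exact h
    · exact absurd h (h2 hx)
    · exact absurd (h1 hx) h
  have hcs : HasCompactSupport ψ' := by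
    apply HasCompactSupport.intro (Metric.isCompact_of_isClosed_isBounded
      isClosed_closure hΩb.closure)
    intro x hx
    exact hext x hx
  refine ⟨ψ', hsm, hcs, hsub, hEq, ?_⟩
  intro x hx
  have hfd : fderiv ℝ ψ' x = fderiv ℝ ψ x := by
    apply Filter.EventuallyEq.fderiv_eq
    filter_upwards [hΩo.mem_nhds hx] with y hy
    exact hEq hy
  rw [gradient, gradient, hfd]


lemma memL2_cc {d : ℕ} {E : Type*} [NormedAddCommGroup E] {f : Euc d → E} (hf : Continuous f)
    (hcs : HasCompactSupport f) (μ : Measure (Euc d)) [IsFiniteMeasure μ] :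
    MemLp f 2 μ := by
  obtain ⟨M, hM⟩ := hcs.exists_bound_of_continuous hf
  exact MemLp.of_bound hf.aestronglyMeasurable M (Filter.Eventually.of_forall hM)

set_option maxHeartbeats 2000000 in
/-- Coercivity of the least-squares bilinear form
`A(σ,u; p,v) = (σ + ∇u, ∇v) + ℓ_Ω²(∇·σ, ∇·p) + (σ + ∇u, p)` on
`H(div,Ω) × H¹₀(Ω)`, with `ℓ_Ω = h_Ω` the diameter of `Ω`: there exists a constant
`C` (which can be taken equal to `8`) such that
`A(p,v;p,v) ≥ (1/C)(‖p‖² + ℓ_Ω²‖∇·p‖² + ‖∇v‖²)`. -/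
theorem stmt16 (d : ℕ) (hd : d = 2 ∨ d = 3) (Ω : Set (Euc d))
    (hΩo : IsOpen Ω) (hΩb : Bornology.IsBounded Ω) (hΩc : IsConnected Ω) :
    ∃ C : ℝ, 0 < C ∧ C ≤ 8 ∧
      ∀ (w : Euc d → Euc d) (dw : Euc d → ℝ) (φ : Euc d → ℝ) (gφ : Euc d → Euc d),
        MemHdiv Ω w dw → MemH1 Ω φ gφ → ZeroTraceOn Ω (frontier Ω) φ gφ →
        (1 / C) * ((nOn Ω w) ^ 2 + (Metric.diam Ω) ^ 2 * (nOn Ω dw) ^ 2 +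
            (nOn Ω gφ) ^ 2) ≤
          (∫ x in Ω, ⟪w x + gφ x, gφ x⟫) +
            (Metric.diam Ω) ^ 2 * (∫ x in Ω, dw x ^ 2) +
            ∫ x in Ω, ⟪w x + gφ x, w x⟫ := by
  classical
  obtain ⟨n, rfl⟩ : ∃ n, d = n + 1 := by rcases hd with h | h <;> exact ⟨d - 1, by omega⟩
  refine ⟨8, by norm_num, le_refl 8, ?_⟩
  intro w dw φ g hw hφ hz
  obtain ⟨hwL2, hdwL2, hwdiv⟩ := hw
  obtain ⟨hφL2, hgL2, -⟩ := hφ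
  have hwL2 : MemLp w 2 (volume.restrict Ω) := hwL2
  have hdwL2 : MemLp dw 2 (volume.restrict Ω) := hdwL2
  have hφL2 : MemLp φ 2 (volume.restrict Ω) := hφL2
  have hgL2 : MemLp g 2 (volume.restrict Ω) := hgL2
  have hΩm : MeasurableSet Ω := hΩo.measurableSet
  have hne : Ω.Nonempty := hΩc.nonempty
  haveI : IsFiniteMeasure (volume.restrict Ω) := by
    constructor
    rw [Measure.restrict_apply_univ]
    exact lt_of_le_of_lt (measure_mono subset_closure)
      (Metric.isCompact_of_isClosed_isBounded isClosed_closure hΩb.closure).measure_lt_top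
  have hsL2 : MemLp (fun x => w x + g x) 2 (volume.restrict Ω) := hwL2.add hgL2
  have hL0 : 0 ≤ Metric.diam Ω := Metric.diam_nonneg
  have hX0 : 0 ≤ nOn Ω w := Real.sqrt_nonneg _
  have hY0 : 0 ≤ nOn Ω g := Real.sqrt_nonneg _
  have hB0 : 0 ≤ nOn Ω dw := Real.sqrt_nonneg _
  have hA0 : 0 ≤ nOn Ω (fun x => w x + g x) := Real.sqrt_nonneg _
  have hP0 : 0 ≤ nOn Ω φ := Real.sqrt_nonneg _
  -- approximation package
  have approx : ∀ ε, 0 < ε → ∃ ψ' : Euc (n+1) → ℝ, ContDiff ℝ (⊤ : ℕ∞) ψ' ∧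
      HasCompactSupport ψ' ∧ tsupport ψ' ⊆ Ω ∧
      MemLp ψ' 2 (volume.restrict Ω) ∧
      MemLp (fun x => gradient ψ' x) 2 (volume.restrict Ω) ∧
      nOn Ω (fun x => φ x - ψ' x) ≤ ε ∧ nOn Ω (fun x => g x - gradient ψ' x) ≤ ε := by
    intro ε hε
    obtain ⟨ψ, hsm, ⟨W, hWo, hWΓ, hW0⟩, hb⟩ := hz ε hε
    obtain ⟨ψ', h1, h2, h3, h4, h5⟩ := glue hΩo hΩb hsm hWo hWΓ hW0
    have hgcont : Continuous (fun x => gradient ψ' x) :=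
      Continuous.comp (LinearIsometryEquiv.continuous _) (h1.continuous_fderiv (by simp))
    have hgcs : HasCompactSupport (fun x => gradient ψ' x) := by
      apply (h2.fderiv ℝ).comp_left (g := (InnerProductSpace.toDual ℝ _).symm)
      simp
    have e1 : nOn Ω (fun x => φ x - ψ' x) = nOn Ω (fun x => φ x - ψ x) := by
      unfold nOn
      congr 1
      apply setIntegral_congr_fun hΩm
      intro x hx
      simp only
      rw [h4 hx]
    have e2 : nOn Ω (fun x => g x - gradient ψ' x) = nOn Ω (fun x => g x - gradient ψ x) := by
      unfold nOn
      congr 1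
      apply setIntegral_congr_fun hΩm
      intro x hx
      simp only
      rw [h5 hx]
    refine ⟨ψ', h1, h2, h3, memL2_cc h1.continuous h2 _, memL2_cc hgcont hgcs _, ?_, ?_⟩
    · rw [e1]
      have := Real.sqrt_nonneg (∫ x in Ω, ‖g x - gradient ψ x‖ ^ 2)
      unfold nOn at hb ⊢
      linarith
    · rw [e2]
      have := Real.sqrt_nonneg (∫ x in Ω, ‖φ x - ψ x‖ ^ 2)
      unfold nOn at hb ⊢
      linarith
  -- orthogonality
  have horth : (∫ x in Ω, ⟪w x, g x⟫) + (∫ x in Ω, dw x * φ x) = 0 := by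
    have hQ : ∀ ε, 0 < ε → |(∫ x in Ω, ⟪w x, g x⟫) + ∫ x in Ω, dw x * φ x| ≤
        (nOn Ω w + nOn Ω dw) * ε := by
      intro ε hε
      obtain ⟨ψ', h1, h2, h3, hψ'L2, hgψ'L2, h6, h7⟩ := approx ε hε
      have hweak := hwdiv ψ' ⟨h1, h2, h3⟩
      have hsplit1 : (∫ x in Ω, ⟪w x, g x⟫) =
          (∫ x in Ω, ⟪w x, g x - gradient ψ' x⟫) + ∫ x in Ω, ⟪w x, gradient ψ' x⟫ := by
        rw [← integral_add (my_integrable_inner w (fun x => g x - gradient ψ' x) hwL2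
          (hgL2.sub hgψ'L2)) (my_integrable_inner w (fun x => gradient ψ' x) hwL2 hgψ'L2)]
        apply integral_congr_ae
        apply Filter.Eventually.of_forall
        intro x
        simp only
        rw [inner_sub_right]
        ring
      have hsplit2 : (∫ x in Ω, dw x * φ x) =
          (∫ x in Ω, dw x * (φ x - ψ' x)) + ∫ x in Ω, dw x * ψ' x := by
        rw [← integral_add ((my_integrable_inner dw (fun x => φ x - ψ' x) hdwL2
          (hφL2.sub hψ'L2)).congr (Filter.Eventually.of_forall fun x => by
            simp [RCLike.inner_apply, starRingEnd_apply, mul_comm]))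
          ((my_integrable_inner dw ψ' hdwL2 hψ'L2).congr (Filter.Eventually.of_forall fun x => by
            simp [RCLike.inner_apply, starRingEnd_apply, mul_comm]))]
        apply integral_congr_ae
        apply Filter.Eventually.of_forall
        intro x
        ring
      have hcomb : (∫ x in Ω, ⟪w x, g x⟫) + ∫ x in Ω, dw x * φ x =
          (∫ x in Ω, ⟪w x, g x - gradient ψ' x⟫) + ∫ x in Ω, dw x * (φ x - ψ' x) := by
        rw [hsplit1, hsplit2, hweak]
        ring
      rw [hcomb]
      have hb1 : |∫ x in Ω, ⟪w x, g x - gradient ψ' x⟫| ≤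
          nOn Ω w * nOn Ω (fun x => g x - gradient ψ' x) :=
        my_cs w (fun x => g x - gradient ψ' x) hwL2 (hgL2.sub hgψ'L2)
      have hb2 : |∫ x in Ω, dw x * (φ x - ψ' x)| ≤
          nOn Ω dw * nOn Ω (fun x => φ x - ψ' x) :=
        my_cs' dw (fun x => φ x - ψ' x) hdwL2 (hφL2.sub hψ'L2)
      have hn1 : 0 ≤ nOn Ω (fun x => g x - gradient ψ' x) := Real.sqrt_nonneg _
      have hn2 : 0 ≤ nOn Ω (fun x => φ x - ψ' x) := Real.sqrt_nonneg _
      calc |(∫ x in Ω, ⟪w x, g x - gradient ψ' x⟫) + ∫ x in Ω, dw x * (φ x - ψ' x)|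
          ≤ |∫ x in Ω, ⟪w x, g x - gradient ψ' x⟫| + |∫ x in Ω, dw x * (φ x - ψ' x)| :=
            abs_add_le _ _
        _ ≤ nOn Ω w * ε + nOn Ω dw * ε := by
            have c1 : nOn Ω w * nOn Ω (fun x => g x - gradient ψ' x) ≤ nOn Ω w * ε :=
              mul_le_mul_of_nonneg_left h7 hX0
            have c2 : nOn Ω dw * nOn Ω (fun x => φ x - ψ' x) ≤ nOn Ω dw * ε :=
              mul_le_mul_of_nonneg_left h6 hB0
            linarith
        _ = (nOn Ω w + nOn Ω dw) * ε := by ring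
    have habs : |(∫ x in Ω, ⟪w x, g x⟫) + ∫ x in Ω, dw x * φ x| ≤ 0 := by
      apply le_of_forall_pos_le_add
      intro δ hδ
      have hden : (0:ℝ) < nOn Ω w + nOn Ω dw + 1 := by linarith
      have hkey := hQ (δ / (nOn Ω w + nOn Ω dw + 1)) (by positivity)
      have h1 : (nOn Ω w + nOn Ω dw) * (δ / (nOn Ω w + nOn Ω dw + 1)) =
          δ * ((nOn Ω w + nOn Ω dw) / (nOn Ω w + nOn Ω dw + 1)) := by ring
      have h2 : (nOn Ω w + nOn Ω dw) / (nOn Ω w + nOn Ω dw + 1) ≤ 1 := by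
        rw [div_le_one hden]
        linarith
      have h3 : δ * ((nOn Ω w + nOn Ω dw) / (nOn Ω w + nOn Ω dw + 1)) ≤ δ * 1 :=
        mul_le_mul_of_nonneg_left h2 (le_of_lt hδ)
      rw [h1] at hkey
      linarith
    exact abs_nonpos_iff.mp habs
  -- Poincaré for φ
  have hP : nOn Ω φ ≤ Metric.diam Ω * nOn Ω g := by
    have key : ∀ ε, 0 < ε → nOn Ω φ ≤ Metric.diam Ω * nOn Ω g + (1 + Metric.diam Ω) * ε := by
      intro ε hε
      obtain ⟨ψ', h1, h2, h3, hψ'L2, hgψ'L2, h6, h7⟩ := approx ε hε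
      have t1 : nOn Ω φ ≤ nOn Ω (fun x => φ x - ψ' x) + nOn Ω ψ' := by
        have h := my_tri (fun x => φ x - ψ' x) ψ' (hφL2.sub hψ'L2) hψ'L2
        unfold nOn
        simpa using h
      have t2 : nOn Ω ψ' ≤ Metric.diam Ω * nOn Ω (fun x => gradient ψ' x) :=
        poincare_domain hΩb hne hΩm h1 h2 h3
      have t3 : nOn Ω (fun x => gradient ψ' x) ≤ nOn Ω g + ε := by
        have h := my_tri (fun x => gradient ψ' x - g x) g
          (hgψ'L2.sub hgL2) hgL2
        have e3 : nOn Ω (fun x => gradient ψ' x - g x) =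
            nOn Ω (fun x => g x - gradient ψ' x) := by
          unfold nOn
          congr 1
          apply setIntegral_congr_fun hΩm
          intro x _
          show ‖gradient ψ' x - g x‖ ^ 2 = ‖g x - gradient ψ' x‖ ^ 2
          rw [norm_sub_rev]
        have h' : nOn Ω (fun x => gradient ψ' x) ≤
            nOn Ω (fun x => gradient ψ' x - g x) + nOn Ω g := by
          unfold nOn at h ⊢
          simpa using h
        rw [e3] at h'
        linarith
      calc nOn Ω φ ≤ nOn Ω (fun x => φ x - ψ' x) + nOn Ω ψ' := t1
        _ ≤ ε + Metric.diam Ω * (nOn Ω g + ε) := by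
            have := mul_le_mul_of_nonneg_left t3 hL0
            linarith
        _ = Metric.diam Ω * nOn Ω g + (1 + Metric.diam Ω) * ε := by ring
    apply le_of_forall_pos_le_add
    intro ε' hε'
    have := key (ε' / (1 + Metric.diam Ω)) (by positivity)
    calc nOn Ω φ ≤ Metric.diam Ω * nOn Ω g +
        (1 + Metric.diam Ω) * (ε' / (1 + Metric.diam Ω)) := this
      _ = Metric.diam Ω * nOn Ω g + ε' := by
          field_simp
  -- Y bound
  have hYb : nOn Ω g ≤ nOn Ω (fun x => w x + g x) + Metric.diam Ω * nOn Ω dw := by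
    have e1 : nOn Ω g ^ 2 = ∫ x in Ω, ‖g x‖ ^ 2 :=
      Real.sq_sqrt (setIntegral_nonneg hΩm fun x _ => sq_nonneg _)
    have e2 : (∫ x in Ω, ‖g x‖ ^ 2) =
        (∫ x in Ω, ⟪w x + g x, g x⟫) - ∫ x in Ω, ⟪w x, g x⟫ := by
      rw [← integral_sub (my_integrable_inner (fun x => w x + g x) g hsL2 hgL2)
        (my_integrable_inner w g hwL2 hgL2)]
      apply integral_congr_ae
      apply Filter.Eventually.of_forall
      intro x
      simp only
      rw [inner_add_left, real_inner_self_eq_norm_sq]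
      ring
    have e3 : nOn Ω g ^ 2 = (∫ x in Ω, ⟪w x + g x, g x⟫) + ∫ x in Ω, dw x * φ x := by
      rw [e1, e2]
      linarith
    have hb1 : (∫ x in Ω, ⟪w x + g x, g x⟫) ≤ nOn Ω (fun x => w x + g x) * nOn Ω g :=
      le_trans (le_abs_self _) (my_cs (fun x => w x + g x) g hsL2 hgL2)
    have hb2 : (∫ x in Ω, dw x * φ x) ≤ nOn Ω dw * nOn Ω φ :=
      le_trans (le_abs_self _) (my_cs' dw φ hdwL2 hφL2)
    have hb3 : nOn Ω dw * nOn Ω φ ≤ nOn Ω dw * (Metric.diam Ω * nOn Ω g) :=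
      mul_le_mul_of_nonneg_left hP hB0
    have hsq : nOn Ω g ^ 2 ≤
        (nOn Ω (fun x => w x + g x) + Metric.diam Ω * nOn Ω dw) * nOn Ω g := by
      rw [e3]
      nlinarith
    rcases eq_or_lt_of_le hY0 with h | h
    · rw [← h]
      positivity
    · have := hsq
      rw [sq] at this
      exact le_of_mul_le_mul_right this h
  -- X bound
  have hXb : nOn Ω w ≤ nOn Ω (fun x => w x + g x) + nOn Ω g := by
    have h := my_tri (fun x => w x + g x) (fun x => -g x) hsL2 hgL2.neg
    unfold nOn
    simpa using h
  -- RHS identities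
  have hA2 : (∫ x in Ω, ⟪w x + g x, g x⟫) + (∫ x in Ω, ⟪w x + g x, w x⟫) =
      nOn Ω (fun x => w x + g x) ^ 2 := by
    rw [← integral_add (my_integrable_inner (fun x => w x + g x) g hsL2 hgL2)
      (my_integrable_inner (fun x => w x + g x) w hsL2 hwL2)]
    have e : nOn Ω (fun x => w x + g x) ^ 2 = ∫ x in Ω, ‖w x + g x‖ ^ 2 :=
      Real.sq_sqrt (setIntegral_nonneg hΩm fun x _ => sq_nonneg _)
    rw [e]
    apply integral_congr_ae
    apply Filter.Eventually.of_forall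
    intro x
    simp only
    rw [← inner_add_right, add_comm (g x) (w x), real_inner_self_eq_norm_sq]
  have hB2 : (∫ x in Ω, dw x ^ 2) = nOn Ω dw ^ 2 := by
    have e : nOn Ω dw ^ 2 = ∫ x in Ω, ‖dw x‖ ^ 2 :=
      Real.sq_sqrt (setIntegral_nonneg hΩm fun x _ => sq_nonneg _)
    rw [e]
    apply integral_congr_ae
    apply Filter.Eventually.of_forall
    intro x
    simp only
    rw [Real.norm_eq_abs, sq_abs]
  have hgoal : (∫ x in Ω, ⟪w x + g x, g x⟫) + Metric.diam Ω ^ 2 * (∫ x in Ω, dw x ^ 2) +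
      (∫ x in Ω, ⟪w x + g x, w x⟫) =
      nOn Ω (fun x => w x + g x) ^ 2 + Metric.diam Ω ^ 2 * nOn Ω dw ^ 2 := by
    rw [hB2]
    linarith
  rw [hgoal]
  have hX2 : nOn Ω w ^ 2 ≤ (nOn Ω (fun x => w x + g x) + nOn Ω g) ^ 2 :=
    pow_le_pow_left₀ hX0 hXb 2
  have hY2 : nOn Ω g ^ 2 ≤
      (nOn Ω (fun x => w x + g x) + Metric.diam Ω * nOn Ω dw) ^ 2 :=
    pow_le_pow_left₀ hY0 hYb 2
  have hAY : nOn Ω (fun x => w x + g x) * nOn Ω g ≤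
      nOn Ω (fun x => w x + g x) *
        (nOn Ω (fun x => w x + g x) + Metric.diam Ω * nOn Ω dw) :=
    mul_le_mul_of_nonneg_left hYb hA0
  nlinarith [sq_nonneg (nOn Ω (fun x => w x + g x) - Metric.diam Ω * nOn Ω dw),
    mul_nonneg hL0 hB0, sq_nonneg (nOn Ω (fun x => w x + g x))]
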